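/- arXiv:1510.05205 — 7 statements merged into one kernel-verified Lean document; each statement's English description precedes it below -/
import Mathlib

section
/- Let r_min > 0 and let S be a finite set of points in the Euclidean plane ℝ² such that the distance between any two distinct points of S is at least r_min. Let r_I > 0. Then there exists a coloring c : S → ℕ such that c(x) < (2·r_I/r_min + 1)² + 1 for every x ∈ S, and c(x) ≠ c(y) whenever x, y ∈ S are distinct points with dist(x, y) ≤ r_I. (In the paper's terminology: there exists a frequency reuse scheme with at most (2 r_I/r_min + 1)² + 1 subbands such that any two nodes at distance no more than r_I are allocated different subbands.) -/
open scoped Classical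
open Metric MeasureTheory
open scoped ENNReal

/-- Greedy coloring: if `R` is symmetric, there is a coloring of `S` proper for `R`
where each point `x` gets a color `< #(S.filter (fun y => R x y ∨ y = x))`. -/
theorem greedy_coloring {α : Type*} [DecidableEq α] (R : α → α → Prop)
    (hsym : ∀ x y, R x y → R y x) (S : Finset α) :
    ∃ c : α → ℕ,
      (∀ x ∈ S, c x < (S.filter (fun y => R x y ∨ y = x)).card) ∧
      (∀ x ∈ S, ∀ y ∈ S, x ≠ y → R x y → c x ≠ c y) := by
  induction S using Finset.induction_on with
  | empty => exact ⟨fun _ => 0, by simp, by simp⟩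
  | @insert a T ha ih =>
    obtain ⟨c, hbound, hproper⟩ := ih
    set N : Finset α := T.filter (fun y => R a y) with hN
    have hcard : (N.image c).card < (Finset.range (N.card + 1)).card := by
      rw [Finset.card_range]
      exact lt_of_le_of_lt (Finset.card_image_le) (Nat.lt_succ_self _)
    obtain ⟨k, hk, hknot⟩ : ∃ k ∈ Finset.range (N.card + 1), k ∉ N.image c := by
      by_contra h
      push_neg at h
      exact absurd (Finset.card_le_card h) (not_le.mpr hcard)
    refine ⟨Function.update c a k, ?_, ?_⟩
    · intro x hx
      rcases Finset.mem_insert.mp hx with rfl | hxT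
      · rw [Function.update_self]
        have hsub : insert x N ⊆ (insert x T).filter (fun y => R x y ∨ y = x) := by
          intro z hz
          rcases Finset.mem_insert.mp hz with rfl | hzN
          · exact Finset.mem_filter.mpr ⟨Finset.mem_insert_self _ _, Or.inr rfl⟩
          · rcases Finset.mem_filter.mp hzN with ⟨hzT, hRz⟩
            exact Finset.mem_filter.mpr ⟨Finset.mem_insert_of_mem hzT, Or.inl hRz⟩
        have hxN : x ∉ N := fun h => ha (Finset.mem_filter.mp h).1
        have : N.card + 1 ≤ ((insert x T).filter (fun y => R x y ∨ y = x)).card := by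
          calc N.card + 1 = (insert x N).card := (Finset.card_insert_of_notMem hxN).symm
            _ ≤ _ := Finset.card_le_card hsub
        exact lt_of_lt_of_le (Finset.mem_range.mp hk) this
      · have hxa : x ≠ a := fun h => ha (h ▸ hxT)
        rw [Function.update_of_ne hxa]
        refine lt_of_lt_of_le (hbound x hxT) (Finset.card_le_card ?_)
        exact Finset.filter_subset_filter _ (Finset.subset_insert a T)
    · intro x hx y hy hxy hR
      rcases Finset.mem_insert.mp hx with rfl | hxT
      · rcases Finset.mem_insert.mp hy with rfl | hyT
        · exact absurd rfl hxy
        · have hya : y ≠ x := fun h => ha (h ▸ hyT)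
          rw [Function.update_self, Function.update_of_ne hya]
          intro h
          exact hknot (h ▸ Finset.mem_image_of_mem c (Finset.mem_filter.mpr ⟨hyT, hR⟩))
      · rcases Finset.mem_insert.mp hy with rfl | hyT
        · have hxa : x ≠ y := fun h => ha (h ▸ hxT)
          rw [Function.update_of_ne hxa, Function.update_self]
          intro h
          exact hknot (h.symm ▸ Finset.mem_image_of_mem c
            (Finset.mem_filter.mpr ⟨hxT, hsym x y hR⟩))
        · have hxa : x ≠ a := fun h => ha (h ▸ hxT)
          have hya : y ≠ a := fun h => ha (h ▸ hyT)
          rw [Function.update_of_ne hxa, Function.update_of_ne hya]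
          exact hproper x hxT y hyT hxy hR

/-- Packing bound: an `rmin`-separated finite set inside the closed ball of radius
`rI` around `x` has at most `(2 rI / rmin + 1)^2` points. -/
theorem packing_bound (rmin rI : ℝ) (hrmin : 0 < rmin) (hrI : 0 < rI)
    (T : Finset (EuclideanSpace ℝ (Fin 2)))
    (hsep : ∀ y ∈ T, ∀ z ∈ T, y ≠ z → rmin ≤ dist y z)
    (x : EuclideanSpace ℝ (Fin 2)) (hx : ∀ y ∈ T, dist x y ≤ rI) :
    (T.card : ℝ) ≤ (2 * rI / rmin + 1) ^ 2 := by
  set ρ : ℝ := rmin / 2 with hρ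
  have hρpos : 0 < ρ := by positivity
  -- disjoint small balls
  have hdisj : (T : Set (EuclideanSpace ℝ (Fin 2))).PairwiseDisjoint
      (fun y => ball y ρ) := by
    intro y hy z hz hyz
    refine Set.disjoint_left.mpr fun p hp hp' => ?_
    have h1 : dist p y < ρ := mem_ball.mp hp
    have h2 : dist p z < ρ := mem_ball.mp hp'
    have : dist y z < rmin := by
      calc dist y z ≤ dist y p + dist p z := dist_triangle _ _ _
        _ < ρ + ρ := by rw [dist_comm y p]; linarith
        _ = rmin := by rw [hρ]; ring
    exact absurd (hsep y hy z hz hyz) (not_le.mpr this)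
  -- union contained in big ball
  have hsub : (⋃ y ∈ T, ball y ρ) ⊆ ball x (rI + ρ) := by
    intro p hp
    simp only [Set.mem_iUnion] at hp
    obtain ⟨y, hy, hpy⟩ := hp
    have : dist p y < ρ := mem_ball.mp hpy
    have hxy : dist x y ≤ rI := hx y hy
    refine mem_ball.mpr ?_
    calc dist p x ≤ dist p y + dist y x := dist_triangle _ _ _
      _ < ρ + rI := by rw [dist_comm y x]; linarith
      _ = rI + ρ := by ring
  have hmeas : ∀ y ∈ T, MeasurableSet (ball y ρ) := fun y _ => measurableSet_ball
  have hvol : volume (⋃ y ∈ T, ball y ρ) = ∑ y ∈ T, volume (ball y ρ) :=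
    measure_biUnion_finset hdisj hmeas
  set V : ℝ≥0∞ := volume (ball (0 : EuclideanSpace ℝ (Fin 2)) 1) with hV
  have hVpos : V ≠ 0 := (measure_ball_pos _ _ one_pos).ne'
  have hVtop : V ≠ ⊤ := measure_ball_lt_top.ne
  have hball : ∀ y : EuclideanSpace ℝ (Fin 2),
      volume (ball y ρ) = ENNReal.ofReal (ρ ^ 2) * V := by
    intro y
    rw [Measure.addHaar_ball volume y hρpos.le, finrank_euclideanSpace_fin]
  have hbig : volume (ball x (rI + ρ)) = ENNReal.ofReal ((rI + ρ) ^ 2) * V := by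
    rw [Measure.addHaar_ball volume x (by positivity : (0:ℝ) ≤ rI + ρ), finrank_euclideanSpace_fin]
  have hsum : ∑ y ∈ T, volume (ball y ρ) = T.card * (ENNReal.ofReal (ρ ^ 2) * V) := by
    rw [Finset.sum_congr rfl (fun y _ => hball y), Finset.sum_const, nsmul_eq_mul]
  have hle : (T.card : ℝ≥0∞) * (ENNReal.ofReal (ρ ^ 2) * V)
      ≤ ENNReal.ofReal ((rI + ρ) ^ 2) * V := by
    rw [← hsum, ← hvol, ← hbig]
    exact measure_mono hsub
  have hle2 : (T.card : ℝ≥0∞) * ENNReal.ofReal (ρ ^ 2)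
      ≤ ENNReal.ofReal ((rI + ρ) ^ 2) := by
    rw [← ENNReal.mul_le_mul_iff_left hVpos hVtop, mul_assoc]
    exact hle
  have hle3 : (T.card : ℝ) * ρ ^ 2 ≤ (rI + ρ) ^ 2 := by
    have : ENNReal.ofReal ((T.card : ℝ) * ρ ^ 2) ≤ ENNReal.ofReal ((rI + ρ) ^ 2) := by
      rwa [ENNReal.ofReal_mul (by positivity), ENNReal.ofReal_natCast]
    exact (ENNReal.ofReal_le_ofReal_iff (by positivity)).mp this
  have hkey : (2 * rI / rmin + 1) ^ 2 * ρ ^ 2 = (rI + ρ) ^ 2 := by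
    rw [hρ]; field_simp
  rw [← hkey] at hle3
  exact le_of_mul_le_mul_right hle3 (by positivity)

/-- Admissible frequency reuse factor, Lemma 1.
If the points of a finite set `S` in the Euclidean plane are pairwise at
distance at least `r_min > 0`, then for any `r_I > 0` there is a coloring
(subband allocation) `c : ℝ² → ℕ` using colors `< (2 r_I / r_min + 1)² + 1`
on `S`, such that any two distinct points of `S` at distance at most `r_I`
receive different colors. -/
theorem stmt_0 (rmin rI : ℝ) (hrmin : 0 < rmin) (hrI : 0 < rI)
    (S : Finset (EuclideanSpace ℝ (Fin 2)))
    (hsep : ∀ x ∈ S, ∀ y ∈ S, x ≠ y → rmin ≤ dist x y) :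
    ∃ c : EuclideanSpace ℝ (Fin 2) → ℕ,
      (∀ x ∈ S, (c x : ℝ) < (2 * rI / rmin + 1) ^ 2 + 1) ∧
      (∀ x ∈ S, ∀ y ∈ S, x ≠ y → dist x y ≤ rI → c x ≠ c y) := by
  set R : EuclideanSpace ℝ (Fin 2) → EuclideanSpace ℝ (Fin 2) → Prop :=
    fun x y => dist x y ≤ rI ∧ x ≠ y with hR
  have hsym : ∀ x y, R x y → R y x := fun x y ⟨h1, h2⟩ => ⟨by rwa [dist_comm], h2.symm⟩
  obtain ⟨c, hbound, hproper⟩ := greedy_coloring R hsym S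
  refine ⟨c, ?_, fun x hx y hy hxy hd => hproper x hx y hy hxy ⟨hd, hxy⟩⟩
  intro x hx
  have hpack := packing_bound rmin rI hrmin hrI (S.filter (fun y => dist x y ≤ rI))
    (fun y hy z hz => hsep y (Finset.filter_subset _ _ hy) z (Finset.filter_subset _ _ hz))
    x (fun y hy => (Finset.mem_filter.mp hy).2)
  have h1 : c x < (S.filter (fun y => dist x y ≤ rI)).card := by
    refine lt_of_lt_of_le (hbound x hx) (Finset.card_le_card ?_)
    intro z hz
    simp only [Finset.mem_filter] at hz ⊢
    obtain ⟨hzS, h⟩ := hz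
    refine ⟨hzS, ?_⟩
    rcases h with ⟨h1, _⟩ | rfl
    · exact h1
    · simp [hrI.le]
  have h2 : (c x : ℝ) < ((S.filter (fun y => dist x y ≤ rI)).card : ℝ) := by exact_mod_cast h1
  linarith
end

section
/- Let α > 2 be a real number and let x > 0, r > 0. Then the series ∑_{i=1}^∞ [ ((i+1)x + r/2)² − (i x − r/2)² ] · (4/r²) · (i x)^{−α} converges and its sum is at most (4(x + r) / (r² x^{α−1})) · ( 2/(α−2) + 1/(α−1) + 3 ). -/
open scoped Real

lemma aux_summable (p : ℝ) (hp : 1 < p) :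
    Summable (fun i : ℕ => ((i : ℝ) + 1) ^ (-p)) := by
  have h : Summable (fun n : ℕ => (n : ℝ) ^ (-p)) :=
    (Real.summable_nat_rpow (p := -p)).mpr (by linarith)
  exact (h.comp_injective Nat.succ_injective).congr fun i =>
    by simp [Function.comp, Nat.succ_eq_add_one]

lemma aux_tsum (p : ℝ) (hp : 1 < p) :
    (∑' i : ℕ, ((i : ℝ) + 1) ^ (-p)) ≤ 1 + 1 / (p - 1) := by
  have hp1 : (0:ℝ) < p - 1 := by linarith
  have hnn : ∀ i : ℕ, 0 ≤ ((i : ℝ) + 1) ^ (-p) := fun i =>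
    Real.rpow_nonneg (by positivity) _
  apply Real.tsum_le_of_sum_range_le hnn
  intro n
  rcases Nat.eq_zero_or_pos n with rfl | hn
  · simp; positivity
  obtain ⟨m, rfl⟩ := Nat.exists_eq_succ_of_ne_zero hn.ne'
  rw [Finset.sum_range_succ']
  have key : (∑ i ∈ Finset.range m, ((i : ℝ) + 1 + 1) ^ (-p)) ≤ 1 / (p - 1) := by
    have hanti : AntitoneOn (fun t : ℝ => t ^ (-p)) (Set.Icc (1:ℝ) (1 + (m:ℝ))) := by
      intro s hs t ht hst
      exact Real.rpow_le_rpow_of_nonpos (lt_of_lt_of_le one_pos hs.1) hst (by linarith)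
    have hsi := hanti.sum_le_integral
    have hint : (∫ t in (1:ℝ)..(1 + (m:ℝ)), t ^ (-p)) ≤ 1 / (p - 1) := by
      rw [integral_rpow (Or.inr ⟨by intro h; linarith, by
          rw [Set.mem_uIcc]; push_neg; constructor <;> intro h <;> nlinarith [Nat.cast_nonneg (α := ℝ) m]⟩)]
      have h1 : (0:ℝ) ≤ (1 + (m:ℝ)) ^ (-p + 1) := Real.rpow_nonneg (by positivity) _
      rw [Real.one_rpow, div_le_iff_of_neg (by linarith : -p + 1 < 0)]
      have h2 : 1 / (p - 1) * (-p + 1) = -1 := by field_simp; ring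
      rw [h2]; linarith
    calc (∑ i ∈ Finset.range m, ((i : ℝ) + 1 + 1) ^ (-p))
        = ∑ i ∈ Finset.range m, ((1:ℝ) + ((i:ℕ) + 1 : ℕ)) ^ (-p) := by
          apply Finset.sum_congr rfl; intro i _; push_cast; ring_nf
      _ ≤ ∫ t in (1:ℝ)..(1 + (m:ℝ)), t ^ (-p) := hsi
      _ ≤ 1 / (p - 1) := hint
  simp only [Nat.cast_add, Nat.cast_one, Nat.cast_zero]
  rw [show ((0:ℝ)+1)^(-p) = 1 by norm_num]
  linarith

/-- Interference series bound. For `α > 2`, `x > 0`, `r > 0`,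
the series `∑_{i=1}^∞ (((i+1)x + r/2)² − (i x − r/2)²) · (4/r²) · (i x)^{−α}`
converges and its sum is at most
`(4(x+r)/(r² x^{α−1})) · (2/(α−2) + 1/(α−1) + 3)`. -/
theorem stmt_3 (α x r : ℝ) (hα : 2 < α) (hx : 0 < x) (hr : 0 < r) :
    Summable (fun i : ℕ =>
      (((((i : ℝ) + 1) + 1) * x + r / 2) ^ 2 - (((i : ℝ) + 1) * x - r / 2) ^ 2) *
        (4 / r ^ 2) * (((i : ℝ) + 1) * x) ^ (-α)) ∧
    (∑' i : ℕ,
      (((((i : ℝ) + 1) + 1) * x + r / 2) ^ 2 - (((i : ℝ) + 1) * x - r / 2) ^ 2) *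
        (4 / r ^ 2) * (((i : ℝ) + 1) * x) ^ (-α)) ≤
      4 * (x + r) / (r ^ 2 * x ^ (α - 1)) * (2 / (α - 2) + 1 / (α - 1) + 3) := by
  set C : ℝ := 4 * (x + r) / (r ^ 2 * x ^ (α - 1)) with hC
  have hxp : (0:ℝ) < x ^ (α - 1) := Real.rpow_pos_of_pos hx _
  have hCpos : 0 < C := by rw [hC]; positivity
  have heq : ∀ i : ℕ,
      (((((i : ℝ) + 1) + 1) * x + r / 2) ^ 2 - (((i : ℝ) + 1) * x - r / 2) ^ 2) *
        (4 / r ^ 2) * (((i : ℝ) + 1) * x) ^ (-α)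
      = C * (2 * ((i : ℝ) + 1) ^ (-(α - 1)) + ((i : ℝ) + 1) ^ (-α)) := by
    intro i
    have hn : (0:ℝ) < (i : ℝ) + 1 := by positivity
    rw [Real.mul_rpow hn.le hx.le]
    have h1 : ((i:ℝ)+1) ^ (-(α-1)) = ((i:ℝ)+1) ^ (-α) * ((i:ℝ)+1) := by
      rw [show -(α-1) = -α + 1 by ring, Real.rpow_add hn, Real.rpow_one]
    have h2 : x ^ (-α) = (x ^ (α-1))⁻¹ * x⁻¹ := by
      rw [show -α = (-(α-1)) + (-1) by ring, Real.rpow_add hx, Real.rpow_neg hx.le,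
        Real.rpow_neg_one]
    rw [h1, h2, hC]
    field_simp
    ring
  have hs1 : Summable (fun i : ℕ => ((i : ℝ) + 1) ^ (-(α-1))) := aux_summable _ (by linarith)
  have hs2 : Summable (fun i : ℕ => ((i : ℝ) + 1) ^ (-α)) := aux_summable _ (by linarith)
  have hsum : Summable (fun i : ℕ =>
      C * (2 * ((i : ℝ) + 1) ^ (-(α - 1)) + ((i : ℝ) + 1) ^ (-α))) :=
    (((hs1.mul_left 2).add hs2).mul_left C)
  constructor
  · exact hsum.congr fun i => (heq i).symm
  · rw [tsum_congr heq, tsum_mul_left, Summable.tsum_add (hs1.mul_left 2) hs2, tsum_mul_left]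
    have hb1 : (∑' i : ℕ, ((i : ℝ) + 1) ^ (-(α-1))) ≤ 1 + 1 / (α - 2) := by
      have := aux_tsum (α - 1) (by linarith)
      simpa [show α - 1 - 1 = α - 2 by ring] using this
    have hb2 : (∑' i : ℕ, ((i : ℝ) + 1) ^ (-α)) ≤ 1 + 1 / (α - 1) := aux_tsum _ (by linarith)
    have h1nn : 0 ≤ ∑' i : ℕ, ((i : ℝ) + 1) ^ (-(α-1)) :=
      tsum_nonneg fun i => Real.rpow_nonneg (by positivity) _
    calc C * (2 * ∑' i : ℕ, ((i : ℝ) + 1) ^ (-(α-1)) + ∑' i : ℕ, ((i : ℝ) + 1) ^ (-α))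
        ≤ C * (2 * (1 + 1 / (α - 2)) + (1 + 1 / (α - 1))) := by
          apply mul_le_mul_of_nonneg_left _ hCpos.le
          have := mul_le_mul_of_nonneg_left hb1 (by norm_num : (0:ℝ) ≤ 2)
          linarith
      _ = C * (2 / (α - 2) + 1 / (α - 1) + 3) := by ring
end

section
/- Let S be a finite set of points in the Euclidean plane ℝ², let Q ⊆ ℝ² be a measurable set, and let r_max > 0 be such that every point of Q is within distance r_max of some point of S. Then for every point p ∈ ℝ² and every r ≥ r_max, the area (two-dimensional Lebesgue measure) of Q ∩ B(p, r − r_max), where B(p, ρ) is the open ball of radius ρ centered at p, is at most π·r_max² times the number of points of S in the closed ball of radius r centered at p. -/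
open MeasureTheory

lemma vol_cb2 (x : EuclideanSpace ℝ (Fin 2)) (ρ : ℝ) (hρ : 0 ≤ ρ) :
    volume (Metric.closedBall x ρ) = ENNReal.ofReal (Real.pi * ρ ^ 2) := by
  rw [EuclideanSpace.volume_closedBall]
  rw [show (Fintype.card (Fin 2)) = 2 from by simp]
  have hg : Real.Gamma ((2 : ℕ) / 2 + 1) = 1 := by
    rw [show ((2 : ℕ) : ℝ) / 2 + 1 = (1 : ℕ) + 1 by norm_num,
      Real.Gamma_nat_eq_factorial]
    simp
  rw [hg]
  rw [ENNReal.ofReal_mul Real.pi_pos.le, ← ENNReal.ofReal_pow hρ]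
  rw [mul_comm]
  congr 1
  rw [Real.sq_sqrt Real.pi_pos.le]
  norm_num

/-- Voronoi covering area bound. Let `S` be a finite set of
points in the Euclidean plane, `Q` a measurable set every point of which is
within distance `r_max > 0` of some point of `S`. Then for every point `p` and
every `r ≥ r_max`, the area of `Q ∩ B(p, r − r_max)` is at most `π r_max²`
times the number of points of `S` in the closed ball of radius `r` around `p`. -/
theorem stmt_6 (S : Finset (EuclideanSpace ℝ (Fin 2)))
    (Q : Set (EuclideanSpace ℝ (Fin 2))) (hQ : MeasurableSet Q)
    (rmax : ℝ) (hrmax : 0 < rmax)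
    (hcov : ∀ q ∈ Q, ∃ s ∈ S, dist q s ≤ rmax)
    (p : EuclideanSpace ℝ (Fin 2)) (r : ℝ) (hr : rmax ≤ r) :
    volume (Q ∩ Metric.ball p (r - rmax)) ≤
      ENNReal.ofReal (Real.pi * rmax ^ 2 *
        (((S : Set (EuclideanSpace ℝ (Fin 2))) ∩ Metric.closedBall p r).ncard)) := by
  classical
  set T := S.filter (fun s => dist s p ≤ r) with hT
  have hsub : Q ∩ Metric.ball p (r - rmax) ⊆ ⋃ s ∈ T, Metric.closedBall s rmax := by
    rintro q ⟨hqQ, hqB⟩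
    obtain ⟨s, hsS, hds⟩ := hcov q hqQ
    have hsp : dist s p ≤ r := by
      calc dist s p ≤ dist s q + dist q p := dist_triangle s q p
        _ ≤ rmax + (r - rmax) := by
            have := Metric.mem_ball.mp hqB
            rw [dist_comm s q]; linarith
        _ = r := by ring
    exact Set.mem_biUnion (Finset.mem_filter.mpr ⟨hsS, hsp⟩)
      (Metric.mem_closedBall.mpr hds)
  calc volume (Q ∩ Metric.ball p (r - rmax))
      ≤ volume (⋃ s ∈ T, Metric.closedBall s rmax) := measure_mono hsub
    _ ≤ ∑ s ∈ T, volume (Metric.closedBall s rmax) := measure_biUnion_finset_le T _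
    _ = ∑ s ∈ T, ENNReal.ofReal (Real.pi * rmax ^ 2) := by
          exact Finset.sum_congr rfl fun s _ => vol_cb2 s rmax hrmax.le
    _ = T.card * ENNReal.ofReal (Real.pi * rmax ^ 2) := by
          rw [Finset.sum_const, nsmul_eq_mul]
    _ ≤ ENNReal.ofReal (Real.pi * rmax ^ 2 *
        (((S : Set (EuclideanSpace ℝ (Fin 2))) ∩ Metric.closedBall p r).ncard)) := by
          have hset : ((S : Set (EuclideanSpace ℝ (Fin 2))) ∩ Metric.closedBall p r) = ↑T := by
            ext x; simp [hT, Metric.mem_closedBall]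
          rw [hset, Set.ncard_coe_finset]
          rw [mul_comm, ENNReal.ofReal_mul (show (0:ℝ) ≤ Real.pi * rmax ^ 2 by positivity), ENNReal.ofReal_natCast]
end

section
/- Let a > 0, let Q = [0, a] × [0, a] ⊆ ℝ², let S ⊆ Q be a finite set of points, and let r_max > 0 be such that every point of Q is within distance r_max of some point of S. Let p ∈ S and let k ≥ 1 be an integer with 2·√(k−1)·r_max < a/2. Then the closed ball of radius (2·√(k−1) + 1)·r_max centered at p contains at least k points of S. Equivalently, the smallest radius r_p^* such that the closed ball of radius r_p^* centered at p contains at least k points of S satisfies r_p^* ≤ (2·√(k−1) + 1)·r_max. -/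
/-!
Put `R = 2√(k-1)·r_max`. Since `R < a/2`, the quarter of the disc of radius `R` about `p` that
points towards the centre of the square lies in the square. Its part outside `closedBall p r_max`
is covered by the discs of radius `r_max` around the nodes other than `p` within distance
`R + r_max` of `p`. Comparing areas, `πR²/4 ≤ (m - 1)·π r_max² + π r_max²/4`, where `m` is the
number of nodes within distance `R + r_max`; this is `4(k - 1) ≤ 4(m - 1) + 1`, so `k ≤ m`.
-/

open MeasureTheory Metric Set EuclideanSpace

theorem diff_closedBall_subset_biUnion_erase {X : Type*} [PseudoMetricSpace X] [DecidableEq X]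
    {U : Set X} {S : Finset X} {p : X} {R r : ℝ} (hU : U ⊆ closedBall p R)
    (hcov : ∀ x ∈ U, ∃ s ∈ S, dist x s ≤ r) :
    U \ closedBall p r ⊆ ⋃ s ∈ (S.filter (dist · p ≤ R + r)).erase p, closedBall s r := by
  rintro x ⟨hxU, hxp⟩
  obtain ⟨s, hs, hxs⟩ := hcov x hxU
  have hsp : s ≠ p := by
    rintro rfl
    exact hxp hxs
  have hsR : dist s p ≤ R + r := by
    have := mem_closedBall.mp (hU hxU)
    linarith [dist_triangle s x p, dist_comm s x]
  exact mem_iUnion₂.2 ⟨s, Finset.mem_erase.2 ⟨hsp, Finset.mem_filter.2 ⟨hs, hsR⟩⟩, hxs⟩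

namespace EuclideanSpace

variable {ι : Type*} [Fintype ι]

theorem volume_hyperplane (i : ι) (c : ℝ) : volume {x : EuclideanSpace ℝ ι | x i = c} = 0 := by
  have hs : NullMeasurableSet {f : ι → ℝ | f i = c} :=
    (measurableSet_singleton c).preimage (measurable_pi_apply i) |>.nullMeasurableSet
  rw [← Measure.pi_hyperplane (fun _ : ι => (volume : Measure ℝ)) i c]
  exact (PiLp.volume_preserving_ofLp ι).measure_preimage hs

section Reflection

variable [DecidableEq ι]

noncomputable def reflectCoord (i : ι) : EuclideanSpace ℝ ι ≃ₗᵢ[ℝ] EuclideanSpace ℝ ι :=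
  LinearIsometryEquiv.piLpCongrRight 2
    fun j => if j = i then LinearIsometryEquiv.neg ℝ else LinearIsometryEquiv.refl ℝ ℝ

theorem reflectCoord_apply (i j : ι) (x : EuclideanSpace ℝ ι) :
    reflectCoord i x j = if j = i then -x j else x j := by
  change (if j = i then LinearIsometryEquiv.neg ℝ else LinearIsometryEquiv.refl ℝ ℝ) (x j) = _
  split_ifs <;> rfl

theorem volume_eq_two_mul_volume_inter_halfspace {B : Set (EuclideanSpace ℝ ι)}
    (hB : MeasurableSet B) {i : ι} (hBi : reflectCoord i ⁻¹' B = B) {c : ℝ} (hc : c ≠ 0) :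
    volume B = 2 * volume (B ∩ {x | 0 ≤ c * x i}) := by
  have hmeas (c : ℝ) : MeasurableSet (B ∩ {x | 0 ≤ c * x i}) :=
    hB.inter (measurableSet_le measurable_const (by fun_prop))
  have hrefl : reflectCoord i ⁻¹' (B ∩ {x | 0 ≤ c * x i}) = B ∩ {x | 0 ≤ -c * x i} := by
    rw [preimage_inter, hBi]
    ext x
    simp [reflectCoord_apply]
  have hcover : B ∩ {x | 0 ≤ c * x i} ∪ B ∩ {x | 0 ≤ -c * x i} = B := by
    rw [← inter_union_distrib_left, inter_eq_left]
    intro x _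
    simpa using le_total 0 (c * x i)
  have hnull : volume ((B ∩ {x | 0 ≤ c * x i}) ∩ (B ∩ {x | 0 ≤ -c * x i})) = 0 := by
    refine measure_mono_null (fun x ⟨⟨_, hx⟩, ⟨_, hx'⟩⟩ => ?_) (volume_hyperplane i 0)
    have : c * x i = 0 := le_antisymm (by simpa using hx') hx
    simpa [hc] using this
  calc volume B
      = volume (B ∩ {x | 0 ≤ c * x i} ∪ B ∩ {x | 0 ≤ -c * x i})
        + volume ((B ∩ {x | 0 ≤ c * x i}) ∩ (B ∩ {x | 0 ≤ -c * x i})) := by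
        rw [hcover, hnull, add_zero]
    _ = volume (B ∩ {x | 0 ≤ c * x i}) + volume (B ∩ {x | 0 ≤ -c * x i}) :=
        measure_union_add_inter₀ _ (hmeas (-c)).nullMeasurableSet
    _ = 2 * volume (B ∩ {x | 0 ≤ c * x i}) := by
        rw [← hrefl, (reflectCoord i).measurePreserving.measure_preimage
          (hmeas c).nullMeasurableSet, two_mul]

theorem volume_eq_two_pow_mul_volume_inter_orthant {B : Set (EuclideanSpace ℝ ι)}
    (hB : MeasurableSet B) (hBsymm : ∀ i, reflectCoord i ⁻¹' B = B) {δ : ι → ℝ}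
    (hδ : ∀ i, δ i ≠ 0) (s : Finset ι) :
    volume B = 2 ^ s.card * volume (B ∩ {x | ∀ i ∈ s, 0 ≤ δ i * x i}) := by
  induction s using Finset.induction_on with
  | empty => simp
  | insert j s hj ih =>
    set C := B ∩ {x : EuclideanSpace ℝ ι | ∀ i ∈ s, 0 ≤ δ i * x i}
    have hC : MeasurableSet C := by
      refine hB.inter ?_
      simp only [ofPred_forall]
      exact Finset.measurableSet_biInter s fun i _ =>
        measurableSet_le measurable_const (by fun_prop)
    have hCj : reflectCoord j ⁻¹' C = C := by
      rw [preimage_inter, hBsymm j]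
      ext x
      simp only [mem_inter_iff, mem_preimage, mem_ofPred_eq]
      refine and_congr_right fun _ => forall₂_congr fun i hi => ?_
      rw [reflectCoord_apply, if_neg (ne_of_mem_of_not_mem hi hj)]
    have hCinter : C ∩ {x | 0 ≤ δ j * x j} = B ∩ {x | ∀ i ∈ insert j s, 0 ≤ δ i * x i} := by
      ext x
      simp only [C, mem_inter_iff, mem_ofPred_eq, Finset.forall_mem_insert]
      tauto
    rw [ih, volume_eq_two_mul_volume_inter_halfspace hC hCj (hδ j), hCinter,
      Finset.card_insert_of_notMem hj, pow_succ, mul_assoc]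

end Reflection

def closedBallOrthant (p : EuclideanSpace ℝ ι) (δ : ι → ℝ) (r : ℝ) : Set (EuclideanSpace ℝ ι) :=
  {x ∈ closedBall p r | ∀ i, 0 ≤ δ i * (x i - p i)}

theorem volume_closedBall_eq_two_pow_mul_volume_closedBallOrthant (p : EuclideanSpace ℝ ι)
    {δ : ι → ℝ} (hδ : ∀ i, δ i ≠ 0) (r : ℝ) :
    volume (closedBall p r) = 2 ^ Fintype.card ι * volume (closedBallOrthant p δ r) := by
  classical
  have htrans : closedBallOrthant p δ r
      = (· + -p) ⁻¹' (closedBall 0 r ∩ {x | ∀ i ∈ Finset.univ, 0 ≤ δ i * x i}) := by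
    ext x
    simp [closedBallOrthant, dist_eq_norm, sub_eq_add_neg]
  rw [Measure.addHaar_closedBall_center, htrans, measure_preimage_add_right,
    ← Finset.card_univ, ← volume_eq_two_pow_mul_volume_inter_orthant measurableSet_closedBall
      (fun i => by rw [(reflectCoord i).preimage_closedBall, map_zero]) hδ]

theorem pow_card_le_of_closedBallOrthant_diff_subset_biUnion {p : EuclideanSpace ℝ ι}
    {δ : ι → ℝ} (hδ : ∀ i, δ i ≠ 0) {R r : ℝ} (hR : 0 ≤ R) (hr : 0 < r)
    {T : Finset (EuclideanSpace ℝ ι)}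
    (hcov : closedBallOrthant p δ R \ closedBall p r ⊆ ⋃ s ∈ T, closedBall s r) :
    R ^ Fintype.card ι ≤ (2 ^ Fintype.card ι * T.card + 1) * r ^ Fintype.card ι := by
  have hsplit : closedBallOrthant p δ R
      ⊆ (closedBallOrthant p δ R \ closedBall p r) ∪ closedBallOrthant p δ r := by
    intro x hx
    by_cases h : x ∈ closedBall p r
    · exact Or.inr ⟨h, hx.2⟩
    · exact Or.inl ⟨hx, h⟩
  have horthant : volume (closedBallOrthant p δ R)
      ≤ T.card * volume (closedBall p r) + volume (closedBallOrthant p δ r) :=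
    calc volume (closedBallOrthant p δ R)
        ≤ volume (closedBallOrthant p δ R \ closedBall p r) + volume (closedBallOrthant p δ r) :=
          (measure_mono hsplit).trans (measure_union_le _ _)
      _ ≤ ∑ s ∈ T, volume (closedBall s r) + volume (closedBallOrthant p δ r) := by
          gcongr
          exact (measure_mono hcov).trans (measure_biUnion_finset_le _ _)
      _ = T.card * volume (closedBall p r) + volume (closedBallOrthant p δ r) := by
          simp_rw [Measure.addHaar_closedBall_center volume _ r, Finset.sum_const, nsmul_eq_mul]
  have hballs : volume (closedBall p R)
      ≤ (2 ^ Fintype.card ι * T.card + 1) * volume (closedBall p r) := by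
    rw [volume_closedBall_eq_two_pow_mul_volume_closedBallOrthant p hδ R]
    calc 2 ^ Fintype.card ι * volume (closedBallOrthant p δ R)
        ≤ 2 ^ Fintype.card ι * (T.card * volume (closedBall p r)
            + volume (closedBallOrthant p δ r)) := by gcongr
      _ = (2 ^ Fintype.card ι * T.card + 1) * volume (closedBall p r) := by
          rw [volume_closedBall_eq_two_pow_mul_volume_closedBallOrthant p hδ r]
          ring
  rw [Measure.addHaar_closedBall' _ _ hR, Measure.addHaar_closedBall' _ _ hr.le,
    finrank_euclideanSpace, ← mul_assoc,
    ENNReal.mul_le_mul_iff_left (measure_closedBall_pos _ _ one_pos).ne'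
      measure_closedBall_lt_top.ne] at hballs
  refine (ENNReal.ofReal_le_ofReal_iff (by positivity)).1 (hballs.trans_eq ?_)
  rw [ENNReal.ofReal_mul (by positivity)]
  norm_cast

theorem exists_closedBallOrthant_subset_cube {a r : ℝ} {p : EuclideanSpace ℝ ι}
    (hp : ∀ i, p i ∈ Icc 0 a) (hr : r ≤ a / 2) :
    ∃ δ : ι → ℝ, (∀ i, δ i ≠ 0) ∧ closedBallOrthant p δ r ⊆ {x | ∀ i, x i ∈ Icc 0 a} := by
  refine ⟨fun i => if p i ≤ a / 2 then 1 else -1,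
    fun i => by dsimp only; split_ifs <;> norm_num, ?_⟩
  rintro x ⟨hxp, hx⟩ i
  have hxi : |x i - p i| ≤ r := (PiLp.dist_apply_le x p i).trans hxp
  obtain ⟨hp0, hpa⟩ := hp i
  specialize hx i
  rw [abs_le] at hxi
  dsimp only at hx
  split_ifs at hx <;> constructor <;> linarith

end EuclideanSpace

theorem stmt_8_general (a : ℝ)
    (Q : Set (EuclideanSpace ℝ (Fin 2)))
    (hQ : Q = {x : EuclideanSpace ℝ (Fin 2) |
      x 0 ∈ Set.Icc (0 : ℝ) a ∧ x 1 ∈ Set.Icc (0 : ℝ) a})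
    (S : Finset (EuclideanSpace ℝ (Fin 2)))
    (hSQ : (S : Set (EuclideanSpace ℝ (Fin 2))) ⊆ Q)
    (rmax : ℝ) (hrmax : 0 < rmax)
    (hcov : ∀ q ∈ Q, ∃ s ∈ S, dist q s ≤ rmax)
    (p : EuclideanSpace ℝ (Fin 2)) (hp : p ∈ S)
    (k : ℕ) (hk : 1 ≤ k)
    (hka : 2 * Real.sqrt ((k : ℝ) - 1) * rmax < a / 2) :
    k ≤ ((S : Set (EuclideanSpace ℝ (Fin 2))) ∩
        Metric.closedBall p ((2 * Real.sqrt ((k : ℝ) - 1) + 1) * rmax)).ncard := by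
  classical
  set R := 2 * Real.sqrt ((k : ℝ) - 1) * rmax
  have hpQ : ∀ i, p i ∈ Icc 0 a := by simpa [hQ, Fin.forall_fin_two] using hSQ hp
  obtain ⟨δ, hδ, hcube⟩ := exists_closedBallOrthant_subset_cube hpQ hka.le
  have horthantQ : closedBallOrthant p δ R ⊆ Q := hQ ▸ fun x hx => Fin.forall_fin_two.1 (hcube hx)
  set T := S.filter (dist · p ≤ R + rmax)
  have hT : (S : Set (EuclideanSpace ℝ (Fin 2))) ∩
      closedBall p ((2 * Real.sqrt ((k : ℝ) - 1) + 1) * rmax) = T := by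
    ext x
    simp [T, R, add_mul]
  have hpT : p ∈ T := Finset.mem_filter.2 ⟨hp, mem_closedBall_self (by positivity)⟩
  have hcount := pow_card_le_of_closedBallOrthant_diff_subset_biUnion hδ (by positivity) hrmax
    (diff_closedBall_subset_biUnion_erase (fun x hx => hx.1) fun x hx => hcov x (horthantQ hx))
  rw [Fintype.card_fin, Finset.card_erase_of_mem hpT, Nat.cast_pred (Finset.card_pos.2 ⟨p, hpT⟩),
    mul_pow, mul_pow, Real.sq_sqrt (by simpa using hk)] at hcount
  rw [hT, ncard_coe_finset]
  have hkT : 4 * ((k : ℝ) - 1) ≤ 4 * ((T.card : ℝ) - 1) + 1 :=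
    le_of_mul_le_mul_right (by linarith) (by positivity : 0 < rmax ^ 2)
  have hkT' : (k : ℝ) < T.card + 1 := by linarith
  exact Nat.lt_succ_iff.mp (by exact_mod_cast hkT')

/-- Upper bound of source radius, Lemma 5. Let
`Q = [0,a] × [0,a]` be covered within distance `r_max` by a finite set of
nodes `S ⊆ Q`. Then for any node `p ∈ S` and any integer `k ≥ 1` with
`2√(k−1)·r_max < a/2`, the closed ball of radius `(2√(k−1)+1)·r_max` around
`p` contains at least `k` points of `S`. -/
theorem stmt_8 (a : ℝ) (ha : 0 < a)
    (Q : Set (EuclideanSpace ℝ (Fin 2)))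
    (hQ : Q = {x : EuclideanSpace ℝ (Fin 2) |
      x 0 ∈ Set.Icc (0 : ℝ) a ∧ x 1 ∈ Set.Icc (0 : ℝ) a})
    (S : Finset (EuclideanSpace ℝ (Fin 2)))
    (hSQ : (S : Set (EuclideanSpace ℝ (Fin 2))) ⊆ Q)
    (rmax : ℝ) (hrmax : 0 < rmax)
    (hcov : ∀ q ∈ Q, ∃ s ∈ S, dist q s ≤ rmax)
    (p : EuclideanSpace ℝ (Fin 2)) (hp : p ∈ S)
    (k : ℕ) (hk : 1 ≤ k)
    (hka : 2 * Real.sqrt ((k : ℝ) - 1) * rmax < a / 2) :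
    k ≤ ((S : Set (EuclideanSpace ℝ (Fin 2))) ∩
        Metric.closedBall p ((2 * Real.sqrt ((k : ℝ) - 1) + 1) * rmax)).ncard :=
  stmt_8_general a Q hQ S hSQ rmax hrmax hcov p hp k hk hka
end

section
/- Let N ≥ 1 and L ≥ 1 be integers, let p_1, …, p_L ≥ 0 with ∑_{l=1}^L p_l = 1, and let B > L/N. Define q_l^* = min( (B − L/N) · p_l^{2/3} / ∑_{k=1}^L p_k^{2/3} + 1/N , 1 ) for each l. Then: (i) 1/N ≤ q_l^* ≤ 1 for every l and ∑_{l=1}^L q_l^* ≤ B (so q^* is feasible for the constrained cache replication problem); and (ii) ∑_{l=1}^L p_l / √(q_l^*) ≤ ( 1 + (B − L/N)^{−1/2} ) · ( ∑_{l=1}^L p_l^{2/3} )^{3/2}. -/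
/-- Order optimal cache content replication, Theorem 3.
For a popularity distribution `p` on `L` files, `N` nodes, and normalized
cache size `B > L/N`, the vector
`q*_l = min((B − L/N) p_l^{2/3} / ∑_k p_k^{2/3} + 1/N, 1)` is feasible
(`1/N ≤ q*_l ≤ 1` and `∑ q*_l ≤ B`), and achieves
`∑ p_l/√(q*_l) ≤ (1 + (B − L/N)^{−1/2}) (∑ p_l^{2/3})^{3/2}`. -/
theorem stmt_10 (N L : ℕ) (hN : 1 ≤ N) (hL : 1 ≤ L)
    (p : Fin L → ℝ) (hp : ∀ l, 0 ≤ p l) (hsum : ∑ l, p l = 1)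
    (B : ℝ) (hB : (L : ℝ) / N < B)
    (q : Fin L → ℝ)
    (hq : ∀ l, q l =
      min ((B - (L : ℝ) / N) * (p l) ^ ((2 : ℝ) / 3) / (∑ k, (p k) ^ ((2 : ℝ) / 3))
        + 1 / N) 1) :
    (∀ l, 1 / (N : ℝ) ≤ q l ∧ q l ≤ 1) ∧
    (∑ l, q l) ≤ B ∧
    (∑ l, p l / Real.sqrt (q l)) ≤
      (1 + (B - (L : ℝ) / N) ^ (-(1 / 2) : ℝ)) *
        (∑ l, (p l) ^ ((2 : ℝ) / 3)) ^ ((3 : ℝ) / 2) := by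
  set S : ℝ := ∑ k, (p k) ^ ((2 : ℝ) / 3) with hSdef
  set D : ℝ := B - (L : ℝ) / N with hDdef
  have hNpos : (0 : ℝ) < N := by exact_mod_cast Nat.lt_of_lt_of_le Nat.zero_lt_one hN
  have hD : 0 < D := sub_pos.mpr hB
  have hp1 : ∀ l, p l ≤ 1 := by
    intro l
    rw [← hsum]
    exact Finset.single_le_sum (fun i _ => hp i) (Finset.mem_univ l)
  have hple : ∀ l, p l ≤ (p l) ^ ((2 : ℝ) / 3) := by
    intro l
    rcases eq_or_lt_of_le (hp l) with h | h
    · rw [← h, Real.zero_rpow (by norm_num)]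
    · nth_rewrite 1 [← Real.rpow_one (p l)]
      exact Real.rpow_le_rpow_of_exponent_ge h (hp1 l) (by norm_num)
  have hS1 : 1 ≤ S := by
    rw [← hsum]
    exact Finset.sum_le_sum (fun l _ => hple l)
  have hSpos : 0 < S := lt_of_lt_of_le one_pos hS1
  have hN1 : 1 / (N : ℝ) ≤ 1 := by
    rw [div_le_one hNpos]; exact_mod_cast hN
  have hfeas : ∀ l, 1 / (N : ℝ) ≤ q l ∧ q l ≤ 1 := by
    intro l
    refine ⟨?_, by rw [hq l]; exact min_le_right _ _⟩
    rw [hq l]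
    refine le_min ?_ hN1
    have : 0 ≤ D * p l ^ ((2 : ℝ) / 3) / S :=
      div_nonneg (mul_nonneg hD.le (Real.rpow_nonneg (hp l) _)) hSpos.le
    linarith
  refine ⟨hfeas, ?_, ?_⟩
  · calc ∑ l, q l ≤ ∑ l, (D * p l ^ ((2 : ℝ) / 3) / S + 1 / N) :=
          Finset.sum_le_sum (fun l _ => by rw [hq l]; exact min_le_left _ _)
      _ = D * S / S + (L : ℝ) / N := by
          rw [Finset.sum_add_distrib, ← Finset.sum_div, ← Finset.mul_sum]
          simp [Finset.sum_const, Finset.card_univ]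
          ring
      _ = B := by
          rw [mul_div_assoc, div_self hSpos.ne', mul_one]
          simp [hDdef]
  · -- part (ii)
    have key : ∀ l, p l / Real.sqrt (q l) ≤
        p l + D ^ (-(1 / 2) : ℝ) * S ^ ((1 : ℝ) / 2) * p l ^ ((2 : ℝ) / 3) := by
      intro l
      rcases eq_or_lt_of_le (hp l) with h | hpl
      · have hq0 : 0 < q l := lt_of_lt_of_le (one_div_pos.mpr hNpos) (hfeas l).1
        rw [← h, zero_div]
        have h0 : (0:ℝ) ^ ((2:ℝ)/3) = 0 := Real.zero_rpow (by norm_num)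
        rw [h0, mul_zero, add_zero]
      · set m : ℝ := D * p l ^ ((2 : ℝ) / 3) / S with hmdef
        have hm : 0 < m := by positivity
        have hsqm : Real.sqrt m = D ^ ((1:ℝ)/2) * p l ^ ((1:ℝ)/3) / S ^ ((1:ℝ)/2) := by
          rw [Real.sqrt_eq_rpow, hmdef, Real.div_rpow (by positivity) hSpos.le,
            Real.mul_rpow hD.le (by positivity), ← Real.rpow_mul (hp l)]
          norm_num
        have hinv : (Real.sqrt (q l))⁻¹ ≤ (Real.sqrt m)⁻¹ + 1 := by
          rw [hq l]
          rcases le_total (m + 1 / N) 1 with hc | hc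
          · rw [min_eq_left hc]
            have h1 : Real.sqrt m ≤ Real.sqrt (m + 1 / N) :=
              Real.sqrt_le_sqrt (le_add_of_nonneg_right (by positivity))
            have h2 : (Real.sqrt (m + 1 / N))⁻¹ ≤ (Real.sqrt m)⁻¹ :=
              inv_anti₀ (Real.sqrt_pos.mpr hm) h1
            linarith
          · rw [min_eq_right hc, Real.sqrt_one, inv_one]
            have : 0 ≤ (Real.sqrt m)⁻¹ := by positivity
            linarith
        have hmain : p l / Real.sqrt (q l) ≤ p l * (Real.sqrt m)⁻¹ + p l := by
          rw [div_eq_mul_inv]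
          calc p l * (Real.sqrt (q l))⁻¹ ≤ p l * ((Real.sqrt m)⁻¹ + 1) :=
                mul_le_mul_of_nonneg_left hinv (hp l)
            _ = p l * (Real.sqrt m)⁻¹ + p l := by ring
        have hcalc : p l * (Real.sqrt m)⁻¹ =
            D ^ (-(1 / 2) : ℝ) * S ^ ((1 : ℝ) / 2) * p l ^ ((2 : ℝ) / 3) := by
          rw [hsqm]
          have hD12 : (0:ℝ) < D ^ ((1:ℝ)/2) := Real.rpow_pos_of_pos hD _
          have hp13 : (0:ℝ) < p l ^ ((1:ℝ)/3) := Real.rpow_pos_of_pos hpl _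
          have hS12 : (0:ℝ) < S ^ ((1:ℝ)/2) := Real.rpow_pos_of_pos hSpos _
          have hpsplit : p l = p l ^ ((1:ℝ)/3) * p l ^ ((2:ℝ)/3) := by
            rw [← Real.rpow_add hpl]
            norm_num
          have hDneg : D ^ (-(1 / 2) : ℝ) = (D ^ ((1:ℝ)/2))⁻¹ :=
            Real.rpow_neg hD.le _
          rw [hDneg]
          field_simp
          nth_rewrite 1 [hpsplit]
          ring
        linarith [hmain, hcalc ▸ hmain]
    have hsum2 : ∑ l, p l / Real.sqrt (q l) ≤
        1 + D ^ (-(1 / 2) : ℝ) * S ^ ((3 : ℝ) / 2) := by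
      calc ∑ l, p l / Real.sqrt (q l)
          ≤ ∑ l, (p l + D ^ (-(1 / 2) : ℝ) * S ^ ((1 : ℝ) / 2) * p l ^ ((2 : ℝ) / 3)) :=
            Finset.sum_le_sum (fun l _ => key l)
        _ = 1 + D ^ (-(1 / 2) : ℝ) * S ^ ((1 : ℝ) / 2) * S := by
            rw [Finset.sum_add_distrib, hsum, ← Finset.mul_sum]
        _ = 1 + D ^ (-(1 / 2) : ℝ) * S ^ ((3 : ℝ) / 2) := by
            rw [mul_assoc]
            congr 2
            rw [show (3:ℝ)/2 = 1/2 + 1 by norm_num, Real.rpow_add hSpos, Real.rpow_one]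
    have hS32 : 1 ≤ S ^ ((3 : ℝ) / 2) := Real.one_le_rpow hS1 (by norm_num)
    have hc0 : 0 ≤ D ^ (-(1 / 2) : ℝ) := (Real.rpow_pos_of_pos hD _).le
    calc ∑ l, p l / Real.sqrt (q l) ≤ 1 + D ^ (-(1 / 2) : ℝ) * S ^ ((3 : ℝ) / 2) := hsum2
      _ ≤ (1 + D ^ (-(1 / 2) : ℝ)) * S ^ ((3 : ℝ) / 2) := by nlinarith
end

section
/- Let n, m ≥ 1 be integers and let a : {1,…,n} × {1,…,m} → ℝ be nonnegative reals. Let (θ_{ik})_{1≤i≤n, 1≤k≤m} be mutually independent random variables, each uniformly distributed on [0, 2π), and define the random complex matrix H ∈ ℂ^{n×m} by H_{ik} = a_{ik} · exp(𝕚·θ_{ik}). Then 𝔼[ Tr( (Hᴴ H)² ) ] = ∑_{i=1}^n ( ∑_{k=1}^m a_{ik}² )² + ∑_{k=1}^m ( ∑_{i=1}^n a_{ik}² )² − ∑_{i=1}^n ∑_{k=1}^m a_{ik}⁴, where Hᴴ denotes the conjugate transpose of H. -/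
/-!
Expanding the trace, `Tr((HᴴH)²) = ∑_{k,q,i,l} conj(H_ik) H_iq conj(H_lq) H_lk`, and each summand
is `a_ik a_iq a_lq a_lk` times the phase `exp(𝕚(θ_iq - θ_ik)) exp(𝕚(θ_lk - θ_lq))`.
If `i = l` or `k = q` the phases cancel. Otherwise the four phases are distinct, so the pair
`(θ_iq, θ_ik)` is independent of `(θ_lk, θ_lq)` and `θ_iq` is independent of `θ_ik`; as
`𝔼 exp(𝕚θ) = 0` for `θ` uniform on a full period, the expectation vanishes. Inclusion–exclusion
over `{i = l} ∪ {k = q}` turns the surviving terms into the three sums.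
-/

open MeasureTheory ProbabilityTheory Matrix Complex Real Finset
open scoped ENNReal

lemma integral_Ico_exp_I_mul : ∫ x in Set.Ico 0 (2 * π), exp (I * x) = 0 := by
  rw [integral_Ico_eq_integral_Ioo, ← integral_Ioc_eq_integral_Ioo,
    ← intervalIntegral.integral_of_le (by positivity), integral_exp_mul_complex I_ne_zero]
  simp [mul_comm I, exp_two_pi_mul_I]

section Phases

variable {Ω : Type*} [MeasurableSpace Ω] {μ : Measure Ω}

lemma integral_exp_I_mul_eq_zero_of_map_eq {X : Ω → ℝ} (hX : AEMeasurable X μ) {c : ℝ≥0∞}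
    (hlaw : μ.map X = c • volume.restrict (Set.Ico 0 (2 * π))) :
    ∫ ω, exp (I * X ω) ∂μ = 0 := by
  rw [← integral_map (f := fun x : ℝ ↦ exp (I * x)) hX (by fun_prop), hlaw,
    integral_smul_measure, integral_Ico_exp_I_mul, smul_zero]

lemma ProbabilityTheory.IndepFun.integral_exp_I_mul_mul_eq_zero {β : Type*} [MeasurableSpace β]
    {X : Ω → ℝ} {Y : Ω → β} (hXY : IndepFun X Y μ) (hX : AEMeasurable X μ)
    (hY : AEMeasurable Y μ) {c : ℝ≥0∞}
    (hlaw : μ.map X = c • volume.restrict (Set.Ico 0 (2 * π)))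
    {g : β → ℂ} (hg : AEStronglyMeasurable g (μ.map Y)) :
    ∫ ω, exp (I * X ω) * g (Y ω) ∂μ = 0 := by
  rw [hXY.integral_fun_comp_mul_comp (f := fun x : ℝ ↦ exp (I * x)) hX hY (by fun_prop) hg,
    integral_exp_I_mul_eq_zero_of_map_eq hX hlaw, zero_mul]

variable {ι κ : Type*}

noncomputable def cyclePhase (θ : ι × κ → Ω → ℝ) (i l : ι) (k q : κ) (ω : Ω) : ℂ :=
  exp (I * (θ (i, q) ω - θ (i, k) ω)) * exp (I * (θ (l, k) ω - θ (l, q) ω))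

lemma integrable_cyclePhase [IsFiniteMeasure μ] {θ : ι × κ → Ω → ℝ}
    (hmeas : ∀ p, Measurable (θ p)) (i l : ι) (k q : κ) :
    Integrable (cyclePhase θ i l k q) μ :=
  Integrable.of_bound (by unfold cyclePhase; fun_prop) 1
    (ae_of_all _ fun ω ↦ by simp [cyclePhase, norm_exp])

lemma integral_cyclePhase [DecidableEq ι] [DecidableEq κ] [IsProbabilityMeasure μ]
    {θ : ι × κ → Ω → ℝ} (hmeas : ∀ p, Measurable (θ p)) (hindep : iIndepFun θ μ) {c : ℝ≥0∞}
    (hlaw : ∀ p, μ.map (θ p) = c • volume.restrict (Set.Ico 0 (2 * π))) (i l : ι) (k q : κ) :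
    ∫ ω, cyclePhase θ i l k q ω ∂μ = if i = l ∨ k = q then 1 else 0 := by
  unfold cyclePhase
  split_ifs with h
  · have hone (ω : Ω) :
        exp (I * (θ (i, q) ω - θ (i, k) ω)) * exp (I * (θ (l, k) ω - θ (l, q) ω)) = 1 := by
      rw [← Complex.exp_add]
      rcases h with rfl | rfl <;> ring_nf <;> simp
    simp [hone]
  · obtain ⟨hil, hkq⟩ := not_or.mp h
    have hpair : IndepFun (fun ω ↦ (θ (i, q) ω, θ (i, k) ω))
        (fun ω ↦ (θ (l, k) ω, θ (l, q) ω)) μ :=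
      hindep.indepFun_prodMk_prodMk hmeas _ _ _ _
        (by simp [hil]) (by simp [hil]) (by simp [hil]) (by simp [hil])
    refine (hpair.integral_fun_comp_mul_comp (f := fun x ↦ exp (I * (x.1 - x.2)))
      (g := fun x ↦ exp (I * (x.1 - x.2))) (by fun_prop) (by fun_prop) (by fun_prop)
      (by fun_prop)).trans ?_
    suffices ∫ ω, exp (I * (θ (i, q) ω - θ (i, k) ω)) ∂μ = 0 by simp [this]
    simp only [mul_sub, Complex.exp_sub, div_eq_mul_inv]
    have hsame : IndepFun (θ (i, q)) (θ (i, k)) μ :=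
      hindep.indepFun (by simpa using Ne.symm hkq)
    exact hsame.integral_exp_I_mul_mul_eq_zero (hmeas _).aemeasurable (hmeas _).aemeasurable
      (hlaw _) (g := fun y : ℝ ↦ (exp (I * y))⁻¹) (by fun_prop)

end Phases

lemma Matrix.trace_conjTranspose_mul_self_sq {ι κ R : Type*} [Fintype ι] [Fintype κ]
    [DecidableEq κ] [Semiring R] [StarRing R] (M : Matrix ι κ R) :
    trace ((Mᴴ * M) ^ 2) =
      ∑ k, ∑ q, ∑ i, ∑ l, star (M i k) * M i q * (star (M l q) * M l k) := by
  simp only [sq, trace, diag_apply, mul_apply, conjTranspose_apply, sum_mul_sum]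

lemma sum_ite_eq_or_eq {ι κ R : Type*} [Fintype ι] [Fintype κ] [DecidableEq ι] [DecidableEq κ]
    [CommRing R] (b : ι → κ → R) :
    ∑ k, ∑ q, ∑ i, ∑ l, (if i = l ∨ k = q then b i k * b i q * b l q * b l k else 0) =
      ∑ i, (∑ k, b i k ^ 2) ^ 2 + ∑ k, (∑ i, b i k ^ 2) ^ 2 - ∑ i, ∑ k, b i k ^ 4 := by
  have ite_or_eq (P Q : Prop) [Decidable P] [Decidable Q] (x : R) :
      (if P ∨ Q then x else 0) =
        (if P then x else 0) + (if Q then x else 0) - (if P ∧ Q then x else 0) := by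
    by_cases hP : P <;> by_cases hQ : Q <;> simp [hP, hQ]
  simp only [ite_or_eq, sum_add_distrib, sum_sub_distrib, ite_and, sum_ite_eq, mem_univ, if_true,
    sum_ite_irrel, sum_const_zero, sq, sum_mul_sum]
  rw [sum_comm_cycle]
  congr 2
  · exact sum_congr rfl fun _ _ ↦ sum_congr rfl fun _ _ ↦ sum_congr rfl fun _ _ ↦ by ring
  · exact sum_congr rfl fun _ _ ↦ sum_congr rfl fun _ _ ↦ sum_congr rfl fun _ _ ↦ by ring
  · exact sum_comm.trans (sum_congr rfl fun _ _ ↦ sum_congr rfl fun _ _ ↦ by ring)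

theorem stmt_13_general (n m : ℕ)
    (a : Fin n → Fin m → ℝ)
    (Ω : Type*) [MeasurableSpace Ω] (μ : Measure Ω) [IsProbabilityMeasure μ]
    (θ : Fin n × Fin m → Ω → ℝ)
    (hmeas : ∀ ik, Measurable (θ ik))
    (hindep : iIndepFun θ μ)
    (hunif : ∀ ik, Measure.map (θ ik) μ =
      (ENNReal.ofReal (2 * Real.pi))⁻¹ •
        (volume.restrict (Set.Ico (0 : ℝ) (2 * Real.pi))))
    (H : Ω → Matrix (Fin n) (Fin m) ℂ)
    (hH : ∀ ω i k, H ω i k = (a i k : ℂ) * Complex.exp (Complex.I * (θ (i, k) ω : ℂ))) :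
    (∫ ω, Matrix.trace (((H ω)ᴴ * H ω) ^ 2) ∂μ) =
      ((∑ i, (∑ k, a i k ^ 2) ^ 2 + ∑ k, (∑ i, a i k ^ 2) ^ 2
          - ∑ i, ∑ k, a i k ^ 4 : ℝ) : ℂ) := by
  have hterm (ω : Ω) (k q : Fin m) (i l : Fin n) :
      star (H ω i k) * H ω i q * (star (H ω l q) * H ω l k) =
        ((a i k * a i q * a l q * a l k : ℝ) : ℂ) * cyclePhase θ i l k q ω := by
    simp only [cyclePhase, hH, star_def, map_mul, ← exp_conj, conj_ofReal, conj_I, mul_sub,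
      Complex.exp_sub, neg_mul, Complex.exp_neg]
    push_cast
    ring
  have hint (k q : Fin m) (i l : Fin n) : Integrable (fun ω ↦
      ((a i k * a i q * a l q * a l k : ℝ) : ℂ) * cyclePhase θ i l k q ω) μ :=
    (integrable_cyclePhase hmeas i l k q).const_mul _
  calc ∫ ω, trace (((H ω)ᴴ * H ω) ^ 2) ∂μ
      = ∑ k, ∑ q, ∑ i, ∑ l, ((a i k * a i q * a l q * a l k : ℝ) : ℂ) *
          ∫ ω, cyclePhase θ i l k q ω ∂μ := by
        simp (maxDischargeDepth := 5) only [trace_conjTranspose_mul_self_sq, hterm,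
          integral_finsetSum, integrable_finsetSum, hint, mem_univ, implies_true,
          integral_const_mul]
    _ = ∑ k, ∑ q, ∑ i, ∑ l,
          if i = l ∨ k = q then (a i k : ℂ) * a i q * a l q * a l k else 0 := by
        simp only [integral_cyclePhase hmeas hindep hunif, mul_ite, mul_one, mul_zero,
          ofReal_mul]
    _ = _ := by rw [sum_ite_eq_or_eq]; norm_cast

/-- Fourth moment of a phase-fading channel matrix. Let
`a : Fin n → Fin m → ℝ` be nonnegative and let `θ i k` be mutually independent
random phases, each uniformly distributed on `[0, 2π)`. Define the random
complex matrix `H(ω)` with entries `H(ω)_{ik} = a_{ik} exp(𝕚 θ_{ik}(ω))`.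
Then `𝔼[Tr((Hᴴ H)²)] = ∑_i (∑_k a_{ik}²)² + ∑_k (∑_i a_{ik}²)² − ∑_{i,k} a_{ik}⁴`. -/
theorem stmt_13 (n m : ℕ) (hn : 1 ≤ n) (hm : 1 ≤ m)
    (a : Fin n → Fin m → ℝ) (ha : ∀ i k, 0 ≤ a i k)
    (Ω : Type*) [MeasurableSpace Ω] (μ : Measure Ω) [IsProbabilityMeasure μ]
    (θ : Fin n × Fin m → Ω → ℝ)
    (hmeas : ∀ ik, Measurable (θ ik))
    (hindep : iIndepFun θ μ)
    (hunif : ∀ ik, Measure.map (θ ik) μ =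
      (ENNReal.ofReal (2 * Real.pi))⁻¹ •
        (volume.restrict (Set.Ico (0 : ℝ) (2 * Real.pi))))
    (H : Ω → Matrix (Fin n) (Fin m) ℂ)
    (hH : ∀ ω i k, H ω i k = (a i k : ℂ) * Complex.exp (Complex.I * (θ (i, k) ω : ℂ))) :
    (∫ ω, Matrix.trace (((H ω)ᴴ * H ω) ^ 2) ∂μ) =
      ((∑ i, (∑ k, a i k ^ 2) ^ 2 + ∑ k, (∑ i, a i k ^ 2) ^ 2
          - ∑ i, ∑ k, a i k ^ 4 : ℝ) : ℂ) :=
  stmt_13_general n m a Ω μ θ hmeas hindep hunif H hH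
end

section
/- For q ∈ (0, 1), define φ(q) = ⌈( −1 + √(2/q − 1) ) / 2⌉ and ψ(q) = ( φ(q)·(1 − q) − (2/3)·(φ(q)³ − φ(q))·q ) / 2. Then ψ(q) = Θ(1/√q) as q → 0⁺; that is, there exist constants c, C > 0 and q₀ ∈ (0, 1) such that for all q ∈ (0, q₀), c/√q ≤ ψ(q) ≤ C/√q. -/
private lemma aux_le_of_sq {a b : ℝ} (ha : 0 ≤ a) (hb : 0 ≤ b) (h : a^2 ≤ b^2) :
    a ≤ b := by nlinarith

private lemma aux_lt_of_sq {a b : ℝ} (ha : 0 ≤ a) (hb : 0 ≤ b) (h : a^2 < b^2) :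
    a < b := by nlinarith

private lemma aux_gap {t s : ℝ} (ht : 7 ≤ t) (hs : 0 ≤ s)
    (h : t^2 - s^2/4 = 1/12) : t - s/2 ≤ 1/12 := by nlinarith

set_option maxHeartbeats 1000000 in
/-- Per-link traffic factor asymptotics, Corollary 2's key
step. For `q ∈ (0,1)` let `φ(q) = ⌈(−1 + √(2/q − 1))/2⌉` and
`ψ(q) = (φ(q)(1−q) − (2/3)(φ(q)³ − φ(q))q)/2`. Then `ψ(q) = Θ(1/√q)` as
`q → 0⁺`: there are `c, C > 0` and `q₀ ∈ (0,1)` such that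
`c/√q ≤ ψ(q) ≤ C/√q` for all `q ∈ (0, q₀)`. -/
theorem stmt_19 (φ : ℝ → ℤ) (ψ : ℝ → ℝ)
    (hφ : ∀ q : ℝ, φ q = ⌈(-1 + Real.sqrt (2 / q - 1)) / 2⌉)
    (hψ : ∀ q : ℝ, ψ q =
      ((φ q : ℝ) * (1 - q) - (2 / 3) * ((φ q : ℝ) ^ 3 - (φ q : ℝ)) * q) / 2) :
    ∃ c C : ℝ, 0 < c ∧ 0 < C ∧ ∃ q₀ : ℝ, 0 < q₀ ∧ q₀ < 1 ∧
      ∀ q : ℝ, 0 < q → q < q₀ →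
        c / Real.sqrt q ≤ ψ q ∧ ψ q ≤ C / Real.sqrt q := by
  refine ⟨1/10, 1, by norm_num, by norm_num, 1/100, by norm_num, by norm_num, ?_⟩
  intro q hq hq'
  set r := Real.sqrt q with hr_def
  have hr0 : 0 < r := Real.sqrt_pos.mpr hq
  have hr2 : r ^ 2 = q := Real.sq_sqrt hq.le
  have hr' : r < 1/10 := by
    refine aux_lt_of_sq hr0.le (by norm_num) ?_
    rw [hr2]; norm_num; linarith
  set s := Real.sqrt (2 / q - 1) with hs_def
  have hsarg : (0:ℝ) ≤ 2 / q - 1 := by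
    rw [sub_nonneg, le_div_iff₀ hq]; linarith
  have hs2 : s ^ 2 = 2 / q - 1 := Real.sq_sqrt hsarg
  have hs0 : 0 ≤ s := Real.sqrt_nonneg _
  set F : ℝ := ((⌈(-1 + s) / 2⌉ : ℤ) : ℝ) with hF_def
  have hF1 : (-1 + s) / 2 ≤ F := Int.le_ceil _
  have hF2 : F ≤ (-1 + s) / 2 + 1 := (Int.ceil_lt_add_one _).le
  set t := Real.sqrt ((1 - q/3) / (2*q)) with ht_def
  have hA0 : (0:ℝ) < 1 - q/3 := by linarith
  have htarg : (0:ℝ) ≤ (1 - q/3) / (2*q) := by positivity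
  have ht2 : t ^ 2 = (1 - q/3) / (2*q) := Real.sq_sqrt htarg
  have ht0 : 0 ≤ t := Real.sqrt_nonneg _
  have hrel : 2 * q * t ^ 2 = 1 - q/3 := by
    rw [ht2]; field_simp
  have hψq : ψ q = t * (1 - q/3) / 3 - (q/3) * (t - F)^2 * (2*t + F) := by
    rw [hψ q, hφ q, ← hs_def, ← hF_def]
    linear_combination (t/3 - F/2) * hrel
  clear_value r s F t
  -- s ≥ 1
  have h2q : (2:ℝ) ≤ 2/q := by rw [le_div_iff₀ hq]; linarith
  have hs1 : 1 ≤ s := by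
    refine aux_le_of_sq (by norm_num) hs0 ?_
    rw [hs2]; norm_num; linarith
  have hF0 : 0 ≤ F := le_trans (by linarith) hF1
  -- products with r
  have htr2 : (t*r)^2 = (1 - q/3)/2 := by
    rw [mul_pow, hr2, ht2]; field_simp
  have htr0 : 0 ≤ t*r := mul_nonneg ht0 hr0.le
  have htr : 7/10 ≤ t*r := by
    refine aux_le_of_sq (by norm_num) htr0 ?_
    rw [htr2]; norm_num; linarith
  have htr1 : t*r ≤ 1 := by
    refine aux_le_of_sq htr0 (by norm_num) ?_
    rw [htr2]; norm_num; linarith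
  have h10 : (10:ℝ) < 1/r := by
    rw [lt_div_iff₀ hr0]; linarith
  have htlb : 7/10 * (1/r) ≤ t := by
    rw [mul_one_div, div_le_iff₀ hr0]; linarith
  have ht7 : 7 ≤ t := by linarith
  -- t vs s/2
  have hts : t^2 - s^2/4 = 1/12 := by
    rw [ht2, hs2]; field_simp; ring
  have hts1 : s/2 ≤ t := by
    refine aux_le_of_sq (by linarith) ht0 ?_
    rw [div_pow]; linarith
  have hts2 : t - s/2 ≤ 1/12 := aux_gap ht7 hs0 hts
  -- |t - F| ≤ 7/12
  have hd1 : t - F ≤ 7/12 := by linarith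
  have hd2 : F - t ≤ 1/2 := by linarith
  have hdsq : (t - F)^2 ≤ (7/12)^2 := sq_le_sq' (by linarith) hd1
  -- error term
  set E := (q/3) * (t - F)^2 * (2*t + F) with hE_def
  have h2tF0 : (0:ℝ) ≤ 2*t + F := by linarith
  have hE0 : 0 ≤ E := by
    rw [hE_def]
    exact mul_nonneg (mul_nonneg (by positivity) (sq_nonneg _)) h2tF0
  have h2tF : 2*t + F ≤ 3*t + 3/2 := by linarith
  have herr : E ≤ (49/144) * (q * t + q/2) := by
    rw [hE_def]
    calc (q/3) * (t - F)^2 * (2*t + F)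
        ≤ (q/3) * (7/12)^2 * (2*t + F) :=
          mul_le_mul_of_nonneg_right
            (mul_le_mul_of_nonneg_left hdsq (by positivity)) h2tF0
      _ ≤ (q/3) * (7/12)^2 * (3*t + 3/2) :=
          mul_le_mul_of_nonneg_left h2tF (by positivity)
      _ = (49/144) * (q * t + q/2) := by ring
  clear_value E
  have hqtr : q*(t*r) ≤ 1/100 := by
    have := mul_le_mul_of_nonneg_left htr1 hq.le
    linarith
  have hqtr0 : 0 ≤ q*(t*r) := mul_nonneg hq.le htr0
  have hqr : q*r ≤ 1/1000 := by
    have := mul_le_mul hq'.le hr'.le hr0.le (by norm_num : (0:ℝ) ≤ 1/100)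
    linarith
  have herrR : E * r ≤ 1/100 := by
    have h1 := mul_le_mul_of_nonneg_right herr hr0.le
    have h2 : (49/144) * (q * t + q/2) * r
        = (49/144) * (q*(t*r)) + (49/288) * (q*r) := by ring
    rw [h2] at h1
    linarith
  have hmain : 11/100 ≤ t * (1 - q/3) / 3 * r := by
    have h3 : t * (1 - q/3) / 3 * r = (t*r)/3 - (q*(t*r))/9 := by ring
    rw [h3]; linarith
  constructor
  · rw [hψq, div_le_iff₀ hr0]
    have h4 : (t * (1 - q/3) / 3 - E) * r = t * (1 - q/3) / 3 * r - E * r := by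
      ring
    rw [h4]; linarith
  · rw [hψq, le_div_iff₀ hr0]
    have hE0r : 0 ≤ E * r := mul_nonneg hE0 hr0.le
    have h4 : (t * (1 - q/3) / 3 - E) * r = (t*r)/3 - (q*(t*r))/9 - E * r := by
      ring
    rw [h4]; linarith
end
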